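/- arXiv:2010.09477 — 5 statements merged into one kernel-verified Lean document; each statement's English description precedes it below -/
import Mathlib

section
/- Let Σ* be an N×N block-equicorrelation matrix built from a K×K symmetric positive definite core Σ^co and a partition G_1,…,G_K of [N] (i.e. Σ*_{ij} = Σ^co_{kl} whenever i ∈ G_k and j ∈ G_l). Then the optimization problem of minimizing (1/2)‖w‖_2^2 over (w,γ) ∈ R^{N+1} subject to w'1_N = 1 and Σ* w + γ 1_N = 0 has a solution w* that is constant within each group: w*_i = b*_{0k}/N for i ∈ G_k, where, with r_k = |G_k|/N, b*_{0k} = r_k^{-1} · ((Σ^co)^{-1} 1_K)_k / (1_K' (Σ^co)^{-1} 1_K). -/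
/-!
Summing a feasible `v` over each group turns the `N`-dimensional constraints into
`K`-dimensional ones: the group sums `s` satisfy `Σᶜᵒ s = -γ 1_K` and `1_K' s = 1`, which pins
`s` down to `(Σᶜᵒ)⁻¹ 1_K / (1_K' (Σᶜᵒ)⁻¹ 1_K)`. By Cauchy–Schwarz within each group, among all
vectors with prescribed group sums the one spreading each sum evenly over its group has the
least squared norm, and the even spread of those group sums is exactly `w*`.
-/

open scoped BigOperators
open Matrix Finset

section Fibers

variable {ι κ : Type*} [Fintype ι] [DecidableEq κ]

def fiberSum {R : Type*} [AddCommMonoid R] (g : ι → κ) (v : ι → R) (k : κ) : R :=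
  ∑ i with g i = k, v i

def fiberSpread {R : Type*} [DivisionSemiring R] (g : ι → κ) (u : κ → R) (i : ι) : R :=
  u (g i) / #{j | g j = g i}

theorem sum_fiberSum [Fintype κ] {R : Type*} [AddCommMonoid R] (g : ι → κ) (v : ι → R) :
    ∑ k, fiberSum g v k = ∑ i, v i :=
  sum_fiberwise _ g v

theorem mulVec_submatrix_eq_comp_fiberSum [Fintype κ] {l m R : Type*}
    [NonUnitalNonAssocSemiring R] (A : Matrix m κ R) (f : l → m) (g : ι → κ) (v : ι → R) :
    A.submatrix f g *ᵥ v = (A *ᵥ fiberSum g v) ∘ f := by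
  ext i
  simp only [mulVec, dotProduct, submatrix_apply, Function.comp_apply, fiberSum, mul_sum]
  rw [← sum_fiberwise univ g]
  refine sum_congr rfl fun k _ => sum_congr rfl fun j hj => ?_
  rw [(mem_filter.1 hj).2]

theorem fiberSum_fiberSpread {R : Type*} [Semifield R] [CharZero R] (g : ι → κ)
    (hg : Function.Surjective g) (u : κ → R) :
    fiberSum g (fiberSpread g u) = u := by
  ext k
  have hne : (#{j | g j = k} : R) ≠ 0 := by
    obtain ⟨i, hi⟩ := hg k
    exact Nat.cast_ne_zero.2 (card_ne_zero.2 ⟨i, mem_filter.2 ⟨mem_univ _, hi⟩⟩)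
  calc fiberSum g (fiberSpread g u) k = ∑ i with g i = k, u k / #{j | g j = k} :=
        sum_congr rfl fun i hi => by rw [fiberSpread, (mem_filter.1 hi).2]
    _ = u k := by rw [sum_const, nsmul_eq_mul, mul_div_cancel₀ _ hne]

theorem sum_fiberSpread_fiberSum_sq_le [Fintype κ] {R : Type*} [Field R] [LinearOrder R]
    [IsStrictOrderedRing R] (g : ι → κ) (v : ι → R) :
    ∑ i, fiberSpread g (fiberSum g v) i ^ 2 ≤ ∑ i, v i ^ 2 := by
  rw [← sum_fiberwise univ g (fun i => fiberSpread g (fiberSum g v) i ^ 2),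
    ← sum_fiberwise univ g (fun i => v i ^ 2)]
  refine sum_le_sum fun k _ => ?_
  set n := #{j | g j = k}
  calc ∑ i with g i = k, fiberSpread g (fiberSum g v) i ^ 2
      = n * (fiberSum g v k / n) ^ 2 := by
        rw [← nsmul_eq_mul, ← sum_const]
        exact sum_congr rfl fun i hi => by rw [fiberSpread, (mem_filter.1 hi).2]
    _ = fiberSum g v k ^ 2 / n := by
        rcases eq_or_ne n 0 with hn | hn
        · simp [hn]
        · field_simp
    _ ≤ ∑ i with g i = k, v i ^ 2 :=
        div_le_of_le_mul₀ n.cast_nonneg (sum_nonneg fun i _ => sq_nonneg _)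
          (by rw [mul_comm]; exact sq_sum_le_card_mul_sum_sq)

end Fibers

section MinVariance

variable {κ R : Type*} [Fintype κ] [DecidableEq κ] [Field R]

noncomputable def minVarianceWeights (S : Matrix κ κ R) : κ → R :=
  (1 ⬝ᵥ S⁻¹ *ᵥ 1)⁻¹ • S⁻¹ *ᵥ 1

theorem Matrix.PosDef.one_dotProduct_inv_mulVec_one_pos [Nonempty κ] {S : Matrix κ κ ℝ}
    (hS : S.PosDef) : 0 < 1 ⬝ᵥ S⁻¹ *ᵥ 1 := by
  simpa using hS.inv.dotProduct_mulVec_pos one_ne_zero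

theorem sum_minVarianceWeights {S : Matrix κ κ R} (hS : 1 ⬝ᵥ S⁻¹ *ᵥ 1 ≠ 0) :
    ∑ k, minVarianceWeights S k = 1 := by
  rw [← one_dotProduct, minVarianceWeights, dotProduct_smul, smul_eq_mul, inv_mul_cancel₀ hS]

theorem mulVec_minVarianceWeights {S : Matrix κ κ R} (hS : IsUnit S.det) :
    S *ᵥ minVarianceWeights S = (1 ⬝ᵥ S⁻¹ *ᵥ 1)⁻¹ • 1 := by
  rw [minVarianceWeights, mulVec_smul, mulVec_mulVec, mul_nonsing_inv _ hS, one_mulVec]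

theorem eq_minVarianceWeights {S : Matrix κ κ R} (hS : IsUnit S.det) {s : κ → R} {t : R}
    (hSs : S *ᵥ s = t • 1) (hs : ∑ k, s k = 1) : s = minVarianceWeights S := by
  have hs_eq : s = t • S⁻¹ *ᵥ 1 := by
    rw [← mulVec_smul, ← hSs, mulVec_mulVec, nonsing_inv_mul _ hS, one_mulVec]
  have ht : t * (1 ⬝ᵥ S⁻¹ *ᵥ 1) = 1 := by
    rw [← hs, ← one_dotProduct, hs_eq, dotProduct_smul, smul_eq_mul]
  rw [hs_eq, minVarianceWeights, eq_inv_of_mul_eq_one_left ht]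

end MinVariance

theorem stmt10 {N K : ℕ} (hN : 0 < N) (g : Fin N → Fin K)
    (hsurj : Function.Surjective g)
    (Sco : Matrix (Fin K) (Fin K) ℝ) (hco : Sco.PosDef)
    (Sstar : Matrix (Fin N) (Fin N) ℝ)
    (hblock : ∀ i j, Sstar i j = Sco (g i) (g j)) :
    let onesN : Fin N → ℝ := fun _ => 1
    let onesK : Fin K → ℝ := fun _ => 1
    let r : Fin K → ℝ := fun k => ((Finset.univ.filter (fun i => g i = k)).card : ℝ) / (N : ℝ)
    let b : Fin K → ℝ := fun k =>
      (r k)⁻¹ * ((Sco⁻¹.mulVec onesK) k / (onesK ⬝ᵥ Sco⁻¹.mulVec onesK))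
    let w : Fin N → ℝ := fun i => b (g i) / (N : ℝ)
    ∃ γ : ℝ,
      ((∑ i, w i) = 1 ∧ Sstar.mulVec w + γ • onesN = 0) ∧
      ∀ (v : Fin N → ℝ) (γ' : ℝ),
        ((∑ i, v i) = 1 ∧ Sstar.mulVec v + γ' • onesN = 0) →
        (1/2) * ∑ i, (w i)^2 ≤ (1/2) * ∑ i, (v i)^2 := by
  intro onesN onesK r b w
  have : Nonempty (Fin K) := ⟨g ⟨0, hN⟩⟩
  have hdet : IsUnit Sco.det := hco.isUnit.map detMonoidHom
  have hw : w = fiberSpread g (minVarianceWeights Sco) := by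
    ext i
    simp only [w, b, r, onesK, fiberSpread, minVarianceWeights, Pi.smul_apply, smul_eq_mul]
    field_simp
    rfl
  have hSstar : Sstar = Sco.submatrix g g := Matrix.ext hblock
  refine ⟨-(1 ⬝ᵥ Sco⁻¹ *ᵥ 1)⁻¹, ⟨?_, ?_⟩, ?_⟩
  · rw [hw, ← sum_fiberSum g, fiberSum_fiberSpread g hsurj,
      sum_minVarianceWeights hco.one_dotProduct_inv_mulVec_one_pos.ne']
  · rw [hw, hSstar, mulVec_submatrix_eq_comp_fiberSum, fiberSum_fiberSpread g hsurj,
      mulVec_minVarianceWeights hdet]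
    ext i
    simp [onesN]
  · rintro v γ' ⟨hv_sum, hv_eq⟩
    have hSs : Sco *ᵥ fiberSum g v = (-γ') • 1 := by
      ext k
      obtain ⟨i, rfl⟩ := hsurj k
      have := congrFun hv_eq i
      rw [hSstar, mulVec_submatrix_eq_comp_fiberSum] at this
      simp only [Pi.add_apply, Function.comp_apply, Pi.smul_apply, smul_eq_mul, mul_one,
        Pi.zero_apply, Pi.one_apply, onesN] at this ⊢
      linarith
    have hs := eq_minVarianceWeights hdet hSs (by rw [sum_fiberSum, hv_sum])
    rw [hw, ← hs]
    exact mul_le_mul_of_nonneg_left (sum_fiberSpread_fiberSum_sq_le g v) (by norm_num)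
end

section
/- With Σ* the block-equicorrelation matrix as above, the within-group group sums satisfy: the vector (Σ_{i∈G_1} w*_i, …, Σ_{i∈G_K} w*_i) equals (Σ^co)^{-1} 1_K / (1_K' (Σ^co)^{-1} 1_K), and in particular these group sums add up to 1. -/
open scoped BigOperators
open Matrix

/-!
Since `Σ*` only sees the group of each index, `(Σ* w)_i = (Σ^co s)_{g i}` where `s` is the vector
of group sums of `w`. Every group is nonempty, so the KKT condition `Σ* w = -γ 1` becomes
`Σ^co s = -γ 1`, whence `s = -γ (Σ^co)⁻¹ 1`; the budget constraint `1's = 1'w = 1` fixes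
`-γ = 1 / (1'(Σ^co)⁻¹ 1)`.
-/

section GroupSum

variable {ι κ R : Type*} [Fintype ι] [DecidableEq κ]

def groupSum [AddCommMonoid R] (g : ι → κ) (w : ι → R) (k : κ) : R :=
  ∑ i ∈ Finset.univ.filter (fun i => g i = k), w i

theorem sum_groupSum [Fintype κ] [AddCommMonoid R] (g : ι → κ) (w : ι → R) :
    ∑ k, groupSum g w k = ∑ i, w i :=
  Finset.sum_fiberwise _ g w

theorem submatrix_mulVec_eq_mulVec_groupSum [Fintype κ] [NonUnitalNonAssocSemiring R]
    (A : Matrix κ κ R) (g : ι → κ) (w : ι → R) (i : ι) :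
    (A.submatrix g g *ᵥ w) i = (A *ᵥ groupSum g w) (g i) := by
  simp only [mulVec, dotProduct, groupSum, Finset.mul_sum, submatrix_apply]
  rw [← Finset.sum_fiberwise Finset.univ g]
  refine Finset.sum_congr rfl fun k _ => Finset.sum_congr rfl fun j hj => ?_
  rw [(Finset.mem_filter.mp hj).2]

theorem mulVec_groupSum_eq_of_surjective [Fintype κ] [NonUnitalNonAssocSemiring R]
    {A : Matrix κ κ R} {g : ι → κ} (hg : Function.Surjective g) {w : ι → R} {v : κ → R}
    (h : A.submatrix g g *ᵥ w = v ∘ g) :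
    A *ᵥ groupSum g w = v := by
  funext k
  obtain ⟨i, rfl⟩ := hg k
  rw [← submatrix_mulVec_eq_mulVec_groupSum, h, Function.comp_apply]

end GroupSum

theorem Matrix.eq_inv_mulVec_one_div_of_mulVec_eq_smul_one {n 𝕜 : Type*} [Fintype n]
    [DecidableEq n] [Field 𝕜] {A : Matrix n n 𝕜} (hA : IsUnit A.det) {s : n → 𝕜} {c : 𝕜}
    (hs : A *ᵥ s = c • 1) (hsum : ∑ k, s k = 1) (k : n) :
    s k = (A⁻¹ *ᵥ 1) k / (1 ⬝ᵥ A⁻¹ *ᵥ 1) := by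
  have hs_eq : s = c • A⁻¹ *ᵥ 1 := by
    rw [← mulVec_smul, ← hs, mulVec_mulVec, nonsing_inv_mul _ hA, one_mulVec]
  have hc : c * (1 ⬝ᵥ A⁻¹ *ᵥ 1) = 1 := by
    rw [← smul_eq_mul, ← dotProduct_smul, ← hs_eq, one_dotProduct, hsum]
  rw [eq_div_iff (right_ne_zero_of_mul_eq_one hc), hs_eq, Pi.smul_apply, smul_eq_mul,
    mul_right_comm, hc, one_mul]

theorem stmt11_general {N K : ℕ} (g : Fin N → Fin K)
    (hsurj : Function.Surjective g)
    (Sco : Matrix (Fin K) (Fin K) ℝ) (hco : Sco.PosDef)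
    (Sstar : Matrix (Fin N) (Fin N) ℝ)
    (hblock : ∀ i j, Sstar i j = Sco (g i) (g j))
    (w : Fin N → ℝ) (γ : ℝ)
    (hsum : (∑ i, w i) = 1)
    (hkkt : Sstar.mulVec w + γ • (fun _ => (1 : ℝ)) = 0) :
    (∀ k : Fin K, (∑ i ∈ Finset.univ.filter (fun i => g i = k), w i) =
      (Sco⁻¹.mulVec (fun _ => 1)) k /
        ((fun _ => (1 : ℝ)) ⬝ᵥ Sco⁻¹.mulVec (fun _ => 1))) ∧
    (∑ k : Fin K, ∑ i ∈ Finset.univ.filter (fun i => g i = k), w i) = 1 := by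
  have hSstar : Sstar = Sco.submatrix g g := Matrix.ext hblock
  have hgroup : Sco *ᵥ groupSum g w = (-γ) • 1 := by
    refine mulVec_groupSum_eq_of_surjective hsurj ?_
    rw [← hSstar, eq_neg_of_add_eq_zero_left hkkt]
    funext i
    simp
  have hgroup_sum : ∑ k, groupSum g w k = 1 := (sum_groupSum g w).trans hsum
  exact ⟨Matrix.eq_inv_mulVec_one_div_of_mulVec_eq_smul_one hco.det_pos.ne'.isUnit hgroup
    hgroup_sum, hgroup_sum⟩

theorem stmt11 {N K : ℕ} (hN : 0 < N) (g : Fin N → Fin K)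
    (hsurj : Function.Surjective g)
    (Sco : Matrix (Fin K) (Fin K) ℝ) (hco : Sco.PosDef)
    (Sstar : Matrix (Fin N) (Fin N) ℝ)
    (hblock : ∀ i j, Sstar i j = Sco (g i) (g j))
    (w : Fin N → ℝ) (γ : ℝ)
    (hsum : (∑ i, w i) = 1)
    (hkkt : Sstar.mulVec w + γ • (fun _ => (1 : ℝ)) = 0)
    (hmin : ∀ (v : Fin N → ℝ) (γ' : ℝ),
      ((∑ i, v i) = 1 ∧ Sstar.mulVec v + γ' • (fun _ => (1 : ℝ)) = 0) →
      ∑ i, (w i)^2 ≤ ∑ i, (v i)^2) :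
    (∀ k : Fin K, (∑ i ∈ Finset.univ.filter (fun i => g i = k), w i) =
      (Sco⁻¹.mulVec (fun _ => 1)) k /
        ((fun _ => (1 : ℝ)) ⬝ᵥ Sco⁻¹.mulVec (fun _ => 1))) ∧
    (∑ k : Fin K, ∑ i ∈ Finset.univ.filter (fun i => g i = k), w i) = 1 :=
  stmt11_general g hsurj Sco hco Sstar hblock w γ hsum hkkt
end

section
/- Let Σ* be the block-equicorrelation matrix with core Σ^co and group sizes N_1,…,N_K, and let A* = (I_N − N^{-1} 1_N 1_N') Σ*. For any α ∈ R^N with group sums a_k = Σ_{i∈G_k} α_i, it holds that ‖A* α‖_2^2 = N · a' Σ^co (R − r r') Σ^co a, where r = (N_1/N,…,N_K/N)' and R = diag(r). -/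
open scoped BigOperators
open Matrix

lemma stmt12_fib {N K : ℕ} (g : Fin N → Fin K) (f : Fin N → ℝ) :
    ∑ k, ∑ i ∈ Finset.univ.filter (fun i => g i = k), f i = ∑ i, f i :=
  Finset.sum_fiberwise _ _ _

theorem stmt12 {N K : ℕ} (hN : 0 < N) (g : Fin N → Fin K)
    (Sco : Matrix (Fin K) (Fin K) ℝ) (hsym : Sco.IsSymm)
    (Sstar : Matrix (Fin N) (Fin N) ℝ)
    (hblock : ∀ i j, Sstar i j = Sco (g i) (g j))
    (α : Fin N → ℝ) :
    let Astar : Matrix (Fin N) (Fin N) ℝ :=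
      ((1 : Matrix (Fin N) (Fin N) ℝ) -
        (N : ℝ)⁻¹ • vecMulVec (fun _ => 1) (fun _ => 1)) * Sstar
    let a : Fin K → ℝ := fun k => ∑ i ∈ Finset.univ.filter (fun i => g i = k), α i
    let r : Fin K → ℝ := fun k => ((Finset.univ.filter (fun i => g i = k)).card : ℝ) / (N : ℝ)
    (∑ i, (Astar.mulVec α i)^2) =
      (N : ℝ) * (a ⬝ᵥ ((Sco * (Matrix.diagonal r - vecMulVec r r) * Sco).mulVec a)) := by
  intro Astar a r
  have hN0 : (N : ℝ) ≠ 0 := Nat.cast_ne_zero.mpr hN.ne'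
  set v : Fin K → ℝ := Sco.mulVec a with hv
  set m : ℝ := ∑ k, r k * v k with hm
  -- cardinality relation
  have hNk : ∀ k, ((Finset.univ.filter (fun i => g i = k)).card : ℝ) = N * r k := by
    intro k
    show _ = (N : ℝ) * (_ / (N : ℝ))
    field_simp
  -- sum of r is 1
  have hrsum : ∑ k, r k = 1 := by
    have h1 : ∑ k, ((Finset.univ.filter (fun i => g i = k)).card : ℝ) = N := by
      have := stmt12_fib g (fun _ => (1 : ℝ))
      simpa using this
    have : ∑ k, r k = (∑ k, ((Finset.univ.filter (fun i => g i = k)).card : ℝ)) / N := by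
      rw [Finset.sum_div]
    rw [this, h1, div_self hN0]
  -- Sstar *ᵥ α = v ∘ g
  have hSv : ∀ i, Sstar.mulVec α i = v (g i) := by
    intro i
    have : v (g i) = ∑ k, ∑ j ∈ Finset.univ.filter (fun j => g j = k), Sco (g i) (g j) * α j := by
      rw [hv]
      simp only [mulVec, dotProduct]
      refine Finset.sum_congr rfl fun k _ => ?_
      rw [Finset.mul_sum]
      refine Finset.sum_congr rfl fun j hj => ?_
      rw [(Finset.mem_filter.mp hj).2]
    rw [this, stmt12_fib g (fun j => Sco (g i) (g j) * α j)]
    simp only [mulVec, dotProduct, hblock]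
  -- total sum of v ∘ g
  have hsumv : ∑ j, v (g j) = N * m := by
    rw [← stmt12_fib g (fun j => v (g j)), hm, Finset.mul_sum]
    refine Finset.sum_congr rfl fun k _ => ?_
    have h1 : ∑ j ∈ Finset.univ.filter (fun j => g j = k), v (g j)
        = ∑ _j ∈ Finset.univ.filter (fun j => g j = k), v k :=
      Finset.sum_congr rfl fun j hj => by rw [(Finset.mem_filter.mp hj).2]
    rw [h1, Finset.sum_const, nsmul_eq_mul, hNk k]
    ring
  -- Astar *ᵥ α = v ∘ g - m
  have hA : ∀ i, Astar.mulVec α i = v (g i) - m := by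
    intro i
    have key : Astar.mulVec α = ((1 : Matrix (Fin N) (Fin N) ℝ) -
        (N : ℝ)⁻¹ • vecMulVec (fun _ => 1) (fun _ => 1)).mulVec (fun j => v (g j)) := by
      show ((_ : Matrix (Fin N) (Fin N) ℝ) * Sstar).mulVec α = _
      rw [← mulVec_mulVec]
      exact congrArg _ (funext hSv)
    rw [key, sub_mulVec, one_mulVec, smul_mulVec]
    simp only [Pi.sub_apply, Pi.smul_apply, smul_eq_mul]
    have hw : (vecMulVec (fun _ => (1:ℝ)) (fun _ => (1:ℝ))).mulVec (fun j => v (g j)) i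
        = ∑ j, v (g j) := by
      simp [vecMulVec, mulVec, dotProduct]
    rw [hw, hsumv]
    field_simp
  -- both sides equal N * (∑ r v² − m²)
  have hLHS : ∑ i, (Astar.mulVec α i)^2 = (N : ℝ) * (∑ k, r k * (v k)^2 - m^2) := by
    have : ∑ i, (Astar.mulVec α i)^2 = ∑ i, (v (g i) - m)^2 := by
      refine Finset.sum_congr rfl fun i _ => by rw [hA i]
    rw [this, ← stmt12_fib g (fun i => (v (g i) - m)^2)]
    have hfib : ∀ k, ∑ i ∈ Finset.univ.filter (fun i => g i = k), (v (g i) - m)^2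
        = (N : ℝ) * r k * (v k - m)^2 := by
      intro k
      have h1 : ∑ i ∈ Finset.univ.filter (fun i => g i = k), (v (g i) - m)^2
          = ∑ _i ∈ Finset.univ.filter (fun i => g i = k), (v k - m)^2 :=
        Finset.sum_congr rfl fun j hj => by rw [(Finset.mem_filter.mp hj).2]
      rw [h1, Finset.sum_const, nsmul_eq_mul, hNk k]
    rw [Finset.sum_congr rfl (fun k _ => hfib k)]
    have expand : ∀ k, (N : ℝ) * r k * (v k - m)^2
        = (N : ℝ) * (r k * (v k)^2) - 2 * (N : ℝ) * m * (r k * v k) + (N : ℝ) * m^2 * r k := by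
      intro k; ring
    rw [Finset.sum_congr rfl (fun k _ => expand k)]
    rw [Finset.sum_add_distrib, Finset.sum_sub_distrib, ← Finset.mul_sum, ← Finset.mul_sum,
      ← Finset.mul_sum, hrsum, ← hm]
    ring
  rw [hLHS]
  -- now the RHS
  congr 1
  have h1 : (Sco * (Matrix.diagonal r - vecMulVec r r) * Sco).mulVec a
      = Sco.mulVec ((Matrix.diagonal r - vecMulVec r r).mulVec v) := by
    rw [hv, mulVec_mulVec, mulVec_mulVec, Matrix.mul_assoc]
  rw [h1, dotProduct_mulVec]
  have h2 : a ᵥ* Sco = v := by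
    rw [hv, ← vecMul_transpose, hsym.eq]
  rw [h2]
  have h3 : (Matrix.diagonal r - vecMulVec r r).mulVec v = fun k => r k * v k - r k * m := by
    funext k
    rw [sub_mulVec]
    simp only [Pi.sub_apply, mulVec_diagonal]
    congr 1
    simp only [vecMulVec, mulVec, dotProduct, Matrix.of_apply, hm]
    rw [Finset.mul_sum]
    exact Finset.sum_congr rfl fun l _ => by ring
  rw [h3]
  simp only [dotProduct]
  have : ∀ k, v k * (r k * v k - r k * m) = r k * (v k)^2 - m * (r k * v k) := by
    intro k; ring
  rw [Finset.sum_congr rfl fun k _ => this k, Finset.sum_sub_distrib, ← Finset.mul_sum, ← hm]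
  ring
end

section
/- With A^co = R^{1/2}(I_K − 1_K r') Σ^co as above, the (K+1)×K matrix Ã^co obtained by appending the row 1_K' to A^co has full column rank K. -/
open scoped BigOperators
open Matrix

/-!
If `Ã x = 0`, the last row gives `1ᵀx = 0` and, since `√r` has no zero entry, the first `K` rows
give `(I - 1 rᵀ) Σ x = 0`, i.e. `Σ x` is a constant vector `c 1`. Then `xᵀ Σ x = c (1ᵀ x) = 0`, so
`x = 0` by positive definiteness: `Ã` has trivial kernel.
-/

namespace Matrix

variable {m n R : Type*} [Fintype n]

theorem rank_eq_card_width_of_mulVec_injective [Field R] (A : Matrix m n R)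
    (h : Function.Injective A.mulVec) : A.rank = Fintype.card n := by
  rw [rank, LinearMap.finrank_range_of_inj h, Module.finrank_fintype_fun_eq_card]

theorem of_snoc_mulVec [NonUnitalNonAssocSemiring R] {k : ℕ} (A : Matrix (Fin k) n R)
    (v x : n → R) :
    of (Fin.snoc (fun i => A i) v) *ᵥ x = Fin.snoc (A *ᵥ x) (v ⬝ᵥ x) := by
  ext i
  induction i using Fin.lastCases <;> simp [mulVec]

theorem eq_zero_of_diagonal_mulVec_eq_zero [DecidableEq n] [NonUnitalNonAssocSemiring R]
    [NoZeroDivisors R] {d v : n → R} (hd : ∀ i, d i ≠ 0) (h : diagonal d *ᵥ v = 0) : v = 0 := by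
  funext i
  have := congrFun h i
  rw [mulVec_diagonal] at this
  exact (mul_eq_zero.mp this).resolve_left (hd i)

theorem eq_const_of_one_sub_vecMulVec_mulVec_eq_zero [DecidableEq n] [CommRing R]
    {r y : n → R} (h : ((1 : Matrix n n R) - vecMulVec 1 r) *ᵥ y = 0) : y = fun _ => r ⬝ᵥ y := by
  rw [sub_mulVec, one_mulVec, vecMulVec_mulVec, sub_eq_zero] at h
  ext i
  simpa using congrFun h i

theorem PosDef.eq_zero_of_mulVec_eq_const [Ring R] [PartialOrder R] [StarRing R]
    {S : Matrix n n R} (hS : S.PosDef) {x : n → R} {c : R}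
    (hx : ∑ i, x i = 0) (hSx : S *ᵥ x = fun _ => c) : x = 0 := by
  by_contra hx0
  have hpos := hS.dotProduct_mulVec_pos hx0
  rw [hSx] at hpos
  simp [dotProduct, ← Finset.sum_mul, ← star_sum, hx] at hpos

end Matrix

theorem stmt15_general {K : ℕ} (Sco : Matrix (Fin K) (Fin K) ℝ) (hco : Sco.PosDef)
    (r : Fin K → ℝ) (hr : ∀ k, 0 < r k) :
    let Aco : Matrix (Fin K) (Fin K) ℝ :=
      Matrix.diagonal (fun k => Real.sqrt (r k)) *
        ((1 : Matrix (Fin K) (Fin K) ℝ) - vecMulVec (fun _ => 1) r) * Sco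
    let Atilde : Matrix (Fin (K + 1)) (Fin K) ℝ :=
      Matrix.of (Fin.snoc (fun i => Aco i) (fun _ => (1 : ℝ)))
    Atilde.rank = K := by
  intro Aco Atilde
  suffices h : Function.Injective Atilde.mulVec by
    simpa using Atilde.rank_eq_card_width_of_mulVec_injective h
  refine (injective_iff_map_eq_zero Atilde.mulVecLin).mpr fun x hx => ?_
  rw [mulVecLin_apply, of_snoc_mulVec] at hx
  have hAco : Aco *ᵥ x = 0 := funext fun i => by
    simpa using congrFun hx i.castSucc
  have hsum : ∑ i, x i = 0 := by simpa [dotProduct] using congrFun hx (Fin.last K)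
  simp only [Aco, ← mulVec_mulVec] at hAco
  have hdiag := eq_zero_of_diagonal_mulVec_eq_zero
    (fun k => (Real.sqrt_pos.mpr (hr k)).ne') hAco
  exact hco.eq_zero_of_mulVec_eq_const hsum (eq_const_of_one_sub_vecMulVec_mulVec_eq_zero hdiag)

theorem stmt15 {K : ℕ} (Sco : Matrix (Fin K) (Fin K) ℝ) (hco : Sco.PosDef)
    (r : Fin K → ℝ) (hr : ∀ k, 0 < r k) (hrsum : ∑ k, r k = 1) :
    let Aco : Matrix (Fin K) (Fin K) ℝ :=
      Matrix.diagonal (fun k => Real.sqrt (r k)) *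
        ((1 : Matrix (Fin K) (Fin K) ℝ) - vecMulVec (fun _ => 1) r) * Sco
    let Atilde : Matrix (Fin (K + 1)) (Fin K) ℝ :=
      Matrix.of (Fin.snoc (fun i => Aco i) (fun _ => (1 : ℝ)))
    Atilde.rank = K :=
  stmt15_general Sco hco r hr
end

section
/- Let Ã^co be the (K+1)×K matrix stacking A^co = R^{1/2}(I_K − 1_K r')Σ^co and the row 1_K', with Σ^co symmetric positive definite, r positive with entries summing to 1, R = diag(r), and let r̲ = min_k r_k. Then the smallest eigenvalue φ_A of Ã^co' Ã^co satisfies φ_A^{-1} ≤ 2 r̲^{-1} φ_min^{-2}(Σ^co) + K^{-1} φ_max(Σ^co)/φ_min(Σ^co). -/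
open scoped BigOperators
open Matrix

/-! Put `y = Σ x`, `ȳ` its mean, `w = y - ȳ 𝟙` and `σ = 𝟙 ⬝ᵥ x`. The quadratic form of
`Ãᵀ Ã` at `x` is `∑ₖ rₖ (yₖ - r ⬝ᵥ y)² + σ²`, which is at least `r̲ ‖w‖² + σ²` because the mean
minimises the sum of squared deviations. On the other side `x = Σ⁻¹ y`, and the rank-one
(Sherman–Morrison) identity for the form of `Σ⁻¹` in the direction `𝟙` gives
`φ_min ‖x‖² ≤ yᵀ Σ⁻¹ y ≤ σ² / (𝟙ᵀ Σ⁻¹ 𝟙) + wᵀ Σ⁻¹ w ≤ (φ_max / K) σ² + ‖w‖² / φ_min`.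
Hence `‖x‖²` is at most the stated constant times the quadratic form, and testing this on an
eigenvector bounds the smallest eigenvalue `φ_A` from below. -/

lemma sum_sq_sub_mean_le {ι : Type*} [Fintype ι] (y : ι → ℝ) (c : ℝ) :
    ∑ i, (y i - (∑ j, y j) / Fintype.card ι) ^ 2 ≤ ∑ i, (y i - c) ^ 2 := by
  set k : ℝ := (Fintype.card ι : ℝ)
  set μ := (∑ j, y j) / k
  have hcentered : ∑ i, (y i - μ) = 0 := by
    rcases (Nat.cast_nonneg (Fintype.card ι) : (0:ℝ) ≤ k).eq_or_lt with hk | hk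
    · simp [Fintype.card_eq_zero_iff.1 (by exact_mod_cast hk.symm)]
    · rw [Finset.sum_sub_distrib, Finset.sum_const, Finset.card_univ, nsmul_eq_mul,
        mul_div_cancel₀ _ hk.ne', sub_self]
  have hsplit : ∑ i, (y i - c) ^ 2 = ∑ i, (y i - μ) ^ 2 + k * (μ - c) ^ 2 := by
    have : ∀ i, (y i - c) ^ 2 = (y i - μ) ^ 2 + 2 * (μ - c) * (y i - μ) + (μ - c) ^ 2 :=
      fun i => by ring
    simp only [this, Finset.sum_add_distrib, ← Finset.mul_sum, hcentered, Finset.sum_const,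
      Finset.card_univ, nsmul_eq_mul, k]
    ring
  rw [hsplit]
  have : 0 ≤ k := Nat.cast_nonneg _
  nlinarith [sq_nonneg (μ - c)]

namespace Matrix

variable {n : Type*} [Fintype n]

lemma IsHermitian.sub_smul_one_eq_conj [DecidableEq n] {A : Matrix n n ℝ} (hA : A.IsHermitian)
    (c : ℝ) :
    A - c • 1 = Unitary.conjStarAlgAut ℝ _ hA.eigenvectorUnitary
      (diagonal (hA.eigenvalues - fun _ => c)) := by
  rw [show diagonal (hA.eigenvalues - fun _ => c) = diagonal hA.eigenvalues - c • 1 by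
    ext i j; by_cases hij : i = j <;> simp [hij], map_sub, map_smul, map_one]
  conv_lhs => rw [hA.spectral_theorem]
  rfl

lemma IsHermitian.posSemidef_sub_smul_one [DecidableEq n] {A : Matrix n n ℝ}
    (hA : A.IsHermitian) {c : ℝ} (hc : ∀ i, c ≤ hA.eigenvalues i) : (A - c • 1).PosSemidef := by
  rw [hA.sub_smul_one_eq_conj, Unitary.conjStarAlgAut_apply,
    Unitary.isUnit_coe.posSemidef_star_right_conjugate_iff, posSemidef_diagonal_iff]
  exact fun i => sub_nonneg.2 (hc i)

lemma IsHermitian.posSemidef_smul_one_sub [DecidableEq n] {A : Matrix n n ℝ}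
    (hA : A.IsHermitian) {c : ℝ} (hc : ∀ i, hA.eigenvalues i ≤ c) : (c • 1 - A).PosSemidef := by
  rw [← neg_sub, hA.sub_smul_one_eq_conj, ← map_neg, Unitary.conjStarAlgAut_apply,
    Unitary.isUnit_coe.posSemidef_star_right_conjugate_iff, diagonal_neg,
    posSemidef_diagonal_iff]
  exact fun i => by simpa using hc i

lemma IsHermitian.iInf_eigenvalues_mul_dotProduct_self_le [DecidableEq n] [Nonempty n]
    {A : Matrix n n ℝ} (hA : A.IsHermitian) (x : n → ℝ) :
    (⨅ i, hA.eigenvalues i) * (x ⬝ᵥ x) ≤ x ⬝ᵥ A *ᵥ x := by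
  have := (hA.posSemidef_sub_smul_one fun i =>
    ciInf_le (Finite.bddBelow_range hA.eigenvalues) i).dotProduct_mulVec_nonneg x
  simpa [sub_mulVec, smul_mulVec, dotProduct_sub] using this

lemma IsHermitian.dotProduct_mulVec_le_iSup_eigenvalues_mul [DecidableEq n] [Nonempty n]
    {A : Matrix n n ℝ} (hA : A.IsHermitian) (x : n → ℝ) :
    x ⬝ᵥ A *ᵥ x ≤ (⨆ i, hA.eigenvalues i) * (x ⬝ᵥ x) := by
  have := (hA.posSemidef_smul_one_sub fun i =>
    le_ciSup (Finite.bddAbove_range hA.eigenvalues) i).dotProduct_mulVec_nonneg x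
  simpa [sub_mulVec, smul_mulVec, dotProduct_sub] using this

lemma IsHermitian.inv_iInf_eigenvalues_le [DecidableEq n] [Nonempty n] {A : Matrix n n ℝ}
    (hA : A.IsHermitian) {c : ℝ} (hc : 0 < c) (h : ∀ x, x ⬝ᵥ x ≤ c * (x ⬝ᵥ A *ᵥ x)) :
    (⨅ i, hA.eigenvalues i)⁻¹ ≤ c := by
  refine inv_le_of_inv_le₀ hc (le_ciInf fun i => ?_)
  set v : n → ℝ := ⇑(hA.eigenvectorBasis i)
  have hv : v ⬝ᵥ v = 1 := by
    have := hA.eigenvectorBasis.inner_eq_one i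
    rwa [EuclideanSpace.inner_eq_star_dotProduct, star_trivial] at this
  have hev : hA.eigenvalues i = v ⬝ᵥ A *ᵥ v := by simpa using hA.eigenvalues_eq i
  have := h v
  rw [hv, ← hev] at this
  exact (inv_le_iff_one_le_mul₀' hc).2 this

lemma IsSymm.dotProduct_mulVec_comm {A : Matrix n n ℝ} (hA : A.IsSymm) (x y : n → ℝ) :
    x ⬝ᵥ A *ᵥ y = y ⬝ᵥ A *ᵥ x := by
  rw [dotProduct_mulVec, ← mulVec_transpose, hA.eq, dotProduct_comm]

lemma IsSymm.mul_dotProduct_mulVec_smul_add_le {A : Matrix n n ℝ} (hA : A.IsSymm)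
    (a w : n → ℝ) (s : ℝ) :
    (a ⬝ᵥ A *ᵥ a) * ((s • a + w) ⬝ᵥ A *ᵥ (s • a + w)) ≤
      (a ⬝ᵥ A *ᵥ (s • a + w)) ^ 2 + (a ⬝ᵥ A *ᵥ a) * (w ⬝ᵥ A *ᵥ w) := by
  simp only [mulVec_add, mulVec_smul, dotProduct_add, add_dotProduct, dotProduct_smul,
    smul_dotProduct, smul_eq_mul, hA.dotProduct_mulVec_comm w a]
  nlinarith [sq_nonneg (a ⬝ᵥ A *ᵥ w)]

lemma PosSemidef.dotProduct_mulVec_sq_le {A : Matrix n n ℝ} (hA : A.PosSemidef) (x y : n → ℝ) :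
    (x ⬝ᵥ A *ᵥ y) ^ 2 ≤ (x ⬝ᵥ A *ᵥ x) * (y ⬝ᵥ A *ᵥ y) := by
  classical
  have hsymm : A.toBilin'.IsSymm := isSymm_toBilin'_iff_isSymm.2 (by simpa using hA.1)
  simpa only [toBilin'_apply'] using A.toBilin'.apply_sq_le_of_symm
    (fun z => by simpa [toBilin'_apply'] using hA.dotProduct_mulVec_nonneg z)
    (LinearMap.BilinForm.isSymm_iff.1 hsymm) x y

lemma PosDef.mulVec_inv_mulVec [DecidableEq n] {A : Matrix n n ℝ} (hA : A.PosDef) (w : n → ℝ) :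
    A *ᵥ A⁻¹ *ᵥ w = w := by
  rw [mulVec_mulVec, mul_nonsing_inv _ (A.isUnit_iff_isUnit_det.1 hA.isUnit), one_mulVec]

lemma PosDef.dotProduct_self_le_mul_dotProduct_inv_mulVec [DecidableEq n] {A : Matrix n n ℝ}
    (hA : A.PosDef) {M : ℝ} (hM : ∀ x, x ⬝ᵥ A *ᵥ x ≤ M * (x ⬝ᵥ x)) (w : n → ℝ) :
    w ⬝ᵥ w ≤ M * (w ⬝ᵥ A⁻¹ *ᵥ w) := by
  set v := A⁻¹ *ᵥ w
  have hAv : A *ᵥ v = w := hA.mulVec_inv_mulVec w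
  have hcs := hA.posSemidef.dotProduct_mulVec_sq_le v w
  rw [(show A.IsSymm by simpa using hA.1).dotProduct_mulVec_comm, hAv, dotProduct_comm v] at hcs
  have hMw := hM w
  have hww : 0 ≤ w ⬝ᵥ w := dotProduct_self_star_nonneg w
  have hwv : 0 ≤ w ⬝ᵥ v := by simpa [v] using hA.inv.posSemidef.dotProduct_mulVec_nonneg w
  rcases hww.eq_or_lt with h0 | hpos
  · simp [dotProduct_self_eq_zero.1 h0.symm]
  · nlinarith

lemma PosDef.mul_dotProduct_inv_mulVec_le [DecidableEq n] {A : Matrix n n ℝ}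
    (hA : A.PosDef) {m : ℝ} (hm : ∀ x, m * (x ⬝ᵥ x) ≤ x ⬝ᵥ A *ᵥ x) (w : n → ℝ) :
    m * (w ⬝ᵥ A⁻¹ *ᵥ w) ≤ w ⬝ᵥ w := by
  set u := A⁻¹ *ᵥ w
  have hAu : A *ᵥ u = w := hA.mulVec_inv_mulVec w
  have hmu := hm u
  rw [hAu, dotProduct_comm u w] at hmu
  have hW : 0 ≤ w ⬝ᵥ u := by simpa [u] using hA.inv.posSemidef.dotProduct_mulVec_nonneg w
  have hcs := PosSemidef.one.dotProduct_mulVec_sq_le w u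
  simp only [one_mulVec] at hcs
  have hww : 0 ≤ w ⬝ᵥ w := dotProduct_self_star_nonneg w
  have huu : 0 ≤ u ⬝ᵥ u := dotProduct_self_star_nonneg u
  rcases hW.eq_or_lt with h0 | hpos
  · rw [← h0]; simpa using hww
  rcases le_or_gt m 0 with hm0 | hm0
  · nlinarith
  · nlinarith [mul_le_mul_of_nonneg_left hcs hm0.le, mul_le_mul_of_nonneg_left hmu hww]


lemma PosDef.dotProduct_self_le_sq_sum_add_sum_sq_sub_mean [DecidableEq n] [Nonempty n]
    {A : Matrix n n ℝ} (hA : A.PosDef) {m M : ℝ} (hm : 0 < m)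
    (hlow : ∀ x, m * (x ⬝ᵥ x) ≤ x ⬝ᵥ A *ᵥ x) (hup : ∀ x, x ⬝ᵥ A *ᵥ x ≤ M * (x ⬝ᵥ x))
    (x : n → ℝ) :
    x ⬝ᵥ x ≤ M / (Fintype.card n * m) * (∑ i, x i) ^ 2 +
      (m ^ 2)⁻¹ * ∑ i, ((A *ᵥ x) i - (∑ j, (A *ᵥ x) j) / Fintype.card n) ^ 2 := by
  set k : ℝ := (Fintype.card n : ℝ)
  have hk : 0 < k := Nat.cast_pos.2 Fintype.card_pos
  set B := A⁻¹
  have hB : B.PosDef := hA.inv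
  have hBsymm : B.IsSymm := by simpa using hB.1
  set y := A *ᵥ x
  set w : n → ℝ := fun i => y i - (∑ j, y j) / k
  set one : n → ℝ := fun _ => 1
  have hx : B *ᵥ y = x := by
    rw [mulVec_mulVec, nonsing_inv_mul _ (A.isUnit_iff_isUnit_det.1 hA.isUnit), one_mulVec]
  have hy : y = ((∑ j, y j) / k) • one + w := by ext i; simp [w, one]
  have hsum : ∑ i, x i = one ⬝ᵥ B *ᵥ y := by simp [hx, one, dotProduct]
  have hxAx : x ⬝ᵥ A *ᵥ x = y ⬝ᵥ B *ᵥ y := by rw [hx, dotProduct_comm]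
  have hww : ∑ i, w i ^ 2 = w ⬝ᵥ w := by simp [dotProduct, sq]
  have hc : k ≤ M * (one ⬝ᵥ B *ᵥ one) := by
    simpa [one, dotProduct, k] using hA.dotProduct_self_le_mul_dotProduct_inv_mulVec hup one
  have hc0 : 0 ≤ one ⬝ᵥ B *ᵥ one := by simpa using hB.posSemidef.dotProduct_mulVec_nonneg one
  have hW := hA.mul_dotProduct_inv_mulVec_le hlow w
  have hrank1 := hBsymm.mul_dotProduct_mulVec_smul_add_le one w ((∑ j, y j) / k)
  rw [← hy, ← hsum] at hrank1
  have hcpos : 0 < one ⬝ᵥ B *ᵥ one := by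
    rcases hc0.eq_or_lt with h | h
    · rw [← h] at hc; linarith
    · exact h
  have hscale : (∑ i, x i) ^ 2 ≤ (one ⬝ᵥ B *ᵥ one) * (M / k * (∑ i, x i) ^ 2) := by
    rw [← mul_assoc, ← mul_div_assoc, mul_comm _ M]
    exact le_mul_of_one_le_left (sq_nonneg _) ((one_le_div hk).2 hc)
  have hP : y ⬝ᵥ B *ᵥ y ≤ M / k * (∑ i, x i) ^ 2 + w ⬝ᵥ B *ᵥ w :=
    le_of_mul_le_mul_left (by nlinarith) hcpos
  have hX : x ⬝ᵥ x ≤ (M / k * (∑ i, x i) ^ 2 + (w ⬝ᵥ w) / m) / m := by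
    have hWm : w ⬝ᵥ B *ᵥ w ≤ (w ⬝ᵥ w) / m := by rw [le_div_iff₀ hm]; linarith
    rw [le_div_iff₀ hm]
    linarith [hlow x]
  rw [hww]
  calc x ⬝ᵥ x ≤ (M / k * (∑ i, x i) ^ 2 + (w ⬝ᵥ w) / m) / m := hX
    _ = M / (k * m) * (∑ i, x i) ^ 2 + (m ^ 2)⁻¹ * (w ⬝ᵥ w) := by field_simp

lemma PosDef.dotProduct_self_le_mul_weighted_sum_sq_add_sq_sum [DecidableEq n] [Nonempty n]
    {A : Matrix n n ℝ} (hA : A.PosDef) {m M : ℝ} (hm : 0 < m)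
    (hlow : ∀ x, m * (x ⬝ᵥ x) ≤ x ⬝ᵥ A *ᵥ x) (hup : ∀ x, x ⬝ᵥ A *ᵥ x ≤ M * (x ⬝ᵥ x))
    {r : n → ℝ} {rmin : ℝ} (hrmin : 0 < rmin) (hr : ∀ i, rmin ≤ r i) (c : ℝ) (x : n → ℝ) :
    x ⬝ᵥ x ≤ (2 * rmin⁻¹ * (m ^ 2)⁻¹ + (Fintype.card n : ℝ)⁻¹ * M / m) *
      (∑ i, r i * ((A *ᵥ x) i - c) ^ 2 + (∑ i, x i) ^ 2) := by
  set k : ℝ := (Fintype.card n : ℝ)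
  set y := A *ᵥ x
  set S := ∑ i, r i * (y i - c) ^ 2
  have hk : 0 < k := Nat.cast_pos.2 Fintype.card_pos
  have hmM : m ≤ M := by
    have h1 : (1 : n → ℝ) ⬝ᵥ 1 = k := by simp [k]
    have := (hlow 1).trans (hup 1)
    rw [h1] at this
    exact le_of_mul_le_mul_right this hk
  have hS : rmin * ∑ i, (y i - c) ^ 2 ≤ S := by
    rw [Finset.mul_sum]
    exact Finset.sum_le_sum fun i _ => mul_le_mul_of_nonneg_right (hr i) (sq_nonneg _)
  have hV : ∑ i, (y i - (∑ j, y j) / k) ^ 2 ≤ rmin⁻¹ * S := by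
    rw [le_inv_mul_iff₀ hrmin]
    exact (mul_le_mul_of_nonneg_left (sum_sq_sub_mean_le y c) hrmin.le).trans hS
  have ha : 0 ≤ 2 * rmin⁻¹ * (m ^ 2)⁻¹ := by positivity
  have hb : 0 ≤ k⁻¹ * M / m := by have := hm.trans_le hmM; positivity
  have hS0 : 0 ≤ S := hS.trans' (by positivity)
  calc x ⬝ᵥ x ≤ M / (k * m) * (∑ i, x i) ^ 2 + (m ^ 2)⁻¹ * ∑ i, (y i - (∑ j, y j) / k) ^ 2 :=
        hA.dotProduct_self_le_sq_sum_add_sum_sq_sub_mean hm hlow hup x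
    _ ≤ k⁻¹ * M / m * (∑ i, x i) ^ 2 + 2 * rmin⁻¹ * (m ^ 2)⁻¹ * S := by
        rw [show M / (k * m) = k⁻¹ * M / m by ring]
        nlinarith [mul_le_mul_of_nonneg_left hV (by positivity : (0:ℝ) ≤ (m ^ 2)⁻¹),
          (by positivity : (0:ℝ) ≤ (m ^ 2)⁻¹ * rmin⁻¹ * S)]
    _ ≤ _ := by nlinarith [mul_nonneg ha (sq_nonneg (∑ i, x i)), mul_nonneg hb hS0]

lemma dotProduct_mulVec_transpose_mul_self {m : Type*} [Fintype m] (A : Matrix m n ℝ)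
    (x : n → ℝ) : x ⬝ᵥ (Aᵀ * A) *ᵥ x = (A *ᵥ x) ⬝ᵥ (A *ᵥ x) := by
  rw [← mulVec_mulVec, dotProduct_mulVec, vecMul_transpose]

lemma of_snoc_mulVec_dotProduct_self {K : ℕ} (A : Matrix (Fin K) n ℝ) (v x : n → ℝ) :
    (of (Fin.snoc (fun i => A i) v) *ᵥ x) ⬝ᵥ (of (Fin.snoc (fun i => A i) v) *ᵥ x) =
      (A *ᵥ x) ⬝ᵥ (A *ᵥ x) + (v ⬝ᵥ x) ^ 2 := by
  simp [dotProduct, Fin.sum_univ_castSucc, mulVec, sq]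

lemma diagonal_sqrt_mul_one_sub_vecMulVec_mulVec_dotProduct_self [DecidableEq n] {r : n → ℝ}
    (hr : ∀ i, 0 ≤ r i) (y : n → ℝ) :
    ((diagonal (fun i => √(r i)) * (1 - vecMulVec (fun _ => 1) r)) *ᵥ y) ⬝ᵥ
        ((diagonal (fun i => √(r i)) * (1 - vecMulVec (fun _ => 1) r)) *ᵥ y) =
      ∑ i, r i * (y i - r ⬝ᵥ y) ^ 2 := by
  have hrow : ∀ i, ((diagonal (fun i => √(r i)) * (1 - vecMulVec (fun _ => 1) r)) *ᵥ y) i =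
      √(r i) * (y i - r ⬝ᵥ y) := fun i => by
    simp [← mulVec_mulVec, mulVec_diagonal, sub_mulVec, vecMulVec_mulVec]
  simp only [dotProduct, hrow]
  refine Finset.sum_congr rfl fun i _ => ?_
  rw [← sq, mul_pow, Real.sq_sqrt (hr i)]

end Matrix

theorem stmt16_general {K : ℕ} [NeZero K]
    (Sco : Matrix (Fin K) (Fin K) ℝ) (hco : Sco.PosDef)
    (r : Fin K → ℝ) (hr : ∀ k, 0 < r k)
    (Aco : Matrix (Fin K) (Fin K) ℝ)
    (hAco : Aco = Matrix.diagonal (fun k => Real.sqrt (r k)) *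
      ((1 : Matrix (Fin K) (Fin K) ℝ) - vecMulVec (fun _ => 1) r) * Sco)
    (Atilde : Matrix (Fin (K + 1)) (Fin K) ℝ)
    (hAt : Atilde = Matrix.of (Fin.snoc (fun i => Aco i) (fun _ => (1 : ℝ))))
    (hM : (Atildeᵀ * Atilde).IsHermitian) :
    (⨅ i, hM.eigenvalues i)⁻¹ ≤
      2 * (⨅ k, r k)⁻¹ * (((⨅ i, hco.1.eigenvalues i))^2)⁻¹ +
        (K : ℝ)⁻¹ * (⨆ i, hco.1.eigenvalues i) / (⨅ i, hco.1.eigenvalues i) := by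
  have hφmin : 0 < ⨅ i, hco.1.eigenvalues i := by
    obtain ⟨i, hi⟩ := exists_eq_ciInf_of_finite (f := hco.1.eigenvalues)
    exact hi ▸ hco.eigenvalues_pos i
  have hφmax : 0 < ⨆ i, hco.1.eigenvalues i := hφmin.trans_le <|
    ciInf_le_ciSup (Finite.bddBelow_range _) (Finite.bddAbove_range _)
  have hrmin : 0 < ⨅ k, r k := by
    obtain ⟨k, hk⟩ := exists_eq_ciInf_of_finite (f := r)
    exact hk ▸ hr k
  refine IsHermitian.inv_iInf_eigenvalues_le hM (by positivity) fun x => ?_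
  have hquad : x ⬝ᵥ (Atildeᵀ * Atilde) *ᵥ x =
      ∑ k, r k * ((Sco *ᵥ x) k - r ⬝ᵥ Sco *ᵥ x) ^ 2 + (∑ k, x k) ^ 2 := by
    rw [dotProduct_mulVec_transpose_mul_self, hAt, of_snoc_mulVec_dotProduct_self, hAco,
      ← mulVec_mulVec,
      diagonal_sqrt_mul_one_sub_vecMulVec_mulVec_dotProduct_self fun k => (hr k).le]
    simp [dotProduct]
  rw [hquad]
  simpa using hco.dotProduct_self_le_mul_weighted_sum_sq_add_sq_sum hφmin
    hco.1.iInf_eigenvalues_mul_dotProduct_self_le hco.1.dotProduct_mulVec_le_iSup_eigenvalues_mul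
    hrmin (fun k => ciInf_le (Finite.bddBelow_range r) k) (r ⬝ᵥ Sco *ᵥ x) x

theorem stmt16 {K : ℕ} [NeZero K]
    (Sco : Matrix (Fin K) (Fin K) ℝ) (hco : Sco.PosDef)
    (r : Fin K → ℝ) (hr : ∀ k, 0 < r k) (hrsum : ∑ k, r k = 1)
    (Aco : Matrix (Fin K) (Fin K) ℝ)
    (hAco : Aco = Matrix.diagonal (fun k => Real.sqrt (r k)) *
      ((1 : Matrix (Fin K) (Fin K) ℝ) - vecMulVec (fun _ => 1) r) * Sco)
    (Atilde : Matrix (Fin (K + 1)) (Fin K) ℝ)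
    (hAt : Atilde = Matrix.of (Fin.snoc (fun i => Aco i) (fun _ => (1 : ℝ))))
    (hM : (Atildeᵀ * Atilde).IsHermitian) :
    (⨅ i, hM.eigenvalues i)⁻¹ ≤
      2 * (⨅ k, r k)⁻¹ * (((⨅ i, hco.1.eigenvalues i))^2)⁻¹ +
        (K : ℝ)⁻¹ * (⨆ i, hco.1.eigenvalues i) / (⨅ i, hco.1.eigenvalues i) :=
  stmt16_general Sco hco r hr Aco hAco Atilde hAt hM
end
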